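/- If η : ℝ → ℝ is a nonnegative integrable probability density with finite second moment, then ∫ η(x) log η(x) dx ≥ -(2√π/e) · (1 + ∫ x² η(x) dx)^{1/2} (whenever the entropy integral is well-defined). -/

import Mathlib

/-!
Pointwise, `s log s ≥ -(2/e) √s`, so it suffices to bound `∫ √η` from above. Writing
`√η = √(η (1 + x²)) · (1 + x²)^{-1/2}`, Cauchy–Schwarz gives
`∫ √η ≤ (∫ η (1 + x²))^{1/2} (∫ (1 + x²)⁻¹)^{1/2} = (1 + ∫ x² η)^{1/2} √π`.
-/

open Real MeasureTheory

namespace Real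

theorem neg_exp_neg_one_le_mul_log {u : ℝ} (hu : 0 ≤ u) : -exp (-1) ≤ u * log u := by
  rcases hu.eq_or_lt with rfl | hu
  · simp [(exp_pos _).le]
  have h : -log u ≤ exp (-1) / u := by
    have := add_one_le_exp (-1 - log u)
    rw [exp_sub, exp_log hu] at this
    linarith
  have := mul_le_mul_of_nonneg_left h hu.le
  rw [mul_div_cancel₀ _ hu.ne'] at this
  linarith

theorem neg_two_div_exp_mul_sqrt_le_mul_log {s : ℝ} (hs : 0 ≤ s) :
    -(2 / exp 1) * √s ≤ s * log s := by
  have hsplit : s * log s = 2 * √s * (√s * log √s) := by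
    rw [log_sqrt hs]
    linear_combination (log s) * (mul_self_sqrt hs).symm
  have hu := neg_exp_neg_one_le_mul_log (sqrt_nonneg s)
  rw [hsplit, div_eq_mul_inv, ← exp_neg]
  nlinarith [sqrt_nonneg s]

theorem sqrt_mul_mul_sqrt_inv {a b : ℝ} (ha : 0 ≤ a) (hb : 0 < b) : √(a * b) * √b⁻¹ = √a := by
  rw [← sqrt_mul (mul_nonneg ha hb.le), mul_assoc, mul_inv_cancel₀ hb.ne', mul_one]

end Real

section CauchySchwarz

variable {α : Type*} [MeasurableSpace α] {μ : Measure α}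

theorem memLp_two_sqrt {g : α → ℝ} (hg : Integrable g μ) (hg_nonneg : 0 ≤ᵐ[μ] g) :
    MemLp (fun x => √(g x)) 2 μ := by
  refine (memLp_two_iff_integrable_sq
    (continuous_sqrt.comp_aestronglyMeasurable hg.aestronglyMeasurable)).2 ?_
  refine hg.congr ?_
  filter_upwards [hg_nonneg] with x hx
  exact (sq_sqrt hx).symm

variable {f w : α → ℝ} (hf : ∀ x, 0 ≤ f x) (hw : ∀ x, 0 < w x)
  (hfw : Integrable (fun x => f x * w x) μ) (hw_inv : Integrable (fun x => (w x)⁻¹) μ)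
include hf hw hfw hw_inv

theorem integrable_sqrt_of_integrable_mul_of_integrable_inv :
    Integrable (fun x => √(f x)) μ := by
  have hmem := (memLp_two_sqrt hw_inv (.of_forall fun x => (inv_pos.2 (hw x)).le)).integrable_mul
    (memLp_two_sqrt hfw (.of_forall fun x => mul_nonneg (hf x) (hw x).le))
  refine hmem.congr (.of_forall fun x => ?_)
  simp only [Pi.mul_apply]
  rw [mul_comm, sqrt_mul_mul_sqrt_inv (hf x) (hw x)]

theorem integral_sqrt_le_sqrt_integral_mul_mul_sqrt_integral_inv :
    ∫ x, √(f x) ∂μ ≤ √(∫ x, f x * w x ∂μ) * √(∫ x, (w x)⁻¹ ∂μ) := by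
  have hfw_nonneg : 0 ≤ᵐ[μ] fun x => f x * w x := .of_forall fun x => mul_nonneg (hf x) (hw x).le
  have hw_inv_nonneg : 0 ≤ᵐ[μ] fun x => (w x)⁻¹ := .of_forall fun x => (inv_pos.2 (hw x)).le
  have hCS := integral_mul_le_Lp_mul_Lq_of_nonneg Real.HolderConjugate.two_two
    (.of_forall fun x => sqrt_nonneg (f x * w x)) (.of_forall fun x => sqrt_nonneg (w x)⁻¹)
    (by simpa using memLp_two_sqrt hfw hfw_nonneg)
    (by simpa using memLp_two_sqrt hw_inv hw_inv_nonneg)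
  simp only [fun x => sqrt_mul_mul_sqrt_inv (hf x) (hw x), ← sqrt_eq_rpow] at hCS
  have hsq : ∀ g : α → ℝ, 0 ≤ g → (fun x => √(g x) ^ (2 : ℝ)) = g := fun g hg => by
    funext x
    rw [rpow_two, sq_sqrt (hg x)]
  rwa [hsq _ fun x => mul_nonneg (hf x) (hw x).le, hsq _ fun x => (inv_pos.2 (hw x)).le] at hCS

end CauchySchwarz

theorem stmt1 (η : ℝ → ℝ) (hpos : ∀ x, 0 ≤ η x)
    (hint : Integrable η) (hmass : ∫ x, η x = 1)
    (hmom : Integrable (fun x => x ^ 2 * η x))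
    (hent : Integrable (fun x => η x * Real.log (η x))) :
    ∫ x, η x * Real.log (η x) ≥
      -(2 * Real.sqrt π / Real.exp 1) * Real.sqrt (1 + ∫ x, x ^ 2 * η x) := by
  have hweight : ∀ x : ℝ, 0 < 1 + x ^ 2 := fun x => by positivity
  have hweighted_eq : (fun x => η x * (1 + x ^ 2)) = fun x => η x + x ^ 2 * η x := by
    funext x; ring
  have hweighted : Integrable (fun x => η x * (1 + x ^ 2)) := hweighted_eq ▸ hint.add hmom
  have hweighted_integral : ∫ x, η x * (1 + x ^ 2) = 1 + ∫ x, x ^ 2 * η x := by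
    rw [hweighted_eq, integral_add hint hmom, hmass]
  have hCS := integral_sqrt_le_sqrt_integral_mul_mul_sqrt_integral_inv hpos hweight hweighted
    integrable_inv_one_add_sq
  rw [hweighted_integral, integral_univ_inv_one_add_sq] at hCS
  calc -(2 * √π / exp 1) * √(1 + ∫ x, x ^ 2 * η x)
      = -(2 / exp 1) * (√(1 + ∫ x, x ^ 2 * η x) * √π) := by ring
    _ ≤ -(2 / exp 1) * ∫ x, √(η x) :=
      mul_le_mul_of_nonpos_left hCS (neg_nonpos.2 (by positivity))
    _ = ∫ x, -(2 / exp 1) * √(η x) := (integral_const_mul _ _).symm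
    _ ≤ ∫ x, η x * log (η x) :=
      integral_mono ((integrable_sqrt_of_integrable_mul_of_integrable_inv hpos hweight hweighted
        integrable_inv_one_add_sq).const_mul _) hent
        fun x => neg_two_div_exp_mul_sqrt_le_mul_log (hpos x)
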